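/- arXiv:math/9806084 — 2 statements merged into one kernel-verified Lean document; each statement's English description precedes it below -/
import Mathlib

section
/- For proper birational morphisms f: Y → X and g: Z → Y of varieties, the exceptional locus of the composite f ∘ g equals the union of g⁻¹(Exc(f)) and Exc(g), where the exceptional locus of a proper birational morphism is the complement of the largest saturated open subset on which the morphism is an isomorphism. -/
open AlgebraicGeometry CategoryTheory

/-- The exceptional locus of a morphism of schemes `f : X ⟶ Y`: the complement in `X` of the
largest saturated open subset on which `f` is an isomorphism onto an open subset of `Y`.
(An open of the form `f ⁻¹ᵁ V` is automatically saturated.) -/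
noncomputable def excLocus {X Y : Scheme} (f : X ⟶ Y) : Set X :=
  (⋃ (V : {V : Y.Opens // IsIso (f ∣_ V)}), ((f ⁻¹ᵁ (V : Y.Opens)) : Set X))ᶜ

/-- A morphism of schemes is birational if it is an isomorphism over a dense open subset. -/
def IsBirationalMap {X Y : Scheme} (f : X ⟶ Y) : Prop :=
  ∃ V : Y.Opens, Dense (V : Set Y) ∧ IsIso (f ∣_ V)


lemma isIso_of_arrow_iso {X Y X' Y' : Scheme} (f : X ⟶ Y) (g : X' ⟶ Y')
    (e : Arrow.mk f ≅ Arrow.mk g) (h : IsIso f) : IsIso g :=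
  ((MorphismProperty.isomorphisms Scheme).arrow_mk_iso_iff e).mp h

lemma isIso_morphismRestrict_of_le {X Y : Scheme} (f : X ⟶ Y) {U V : Y.Opens}
    (hV : IsIso (f ∣_ V)) (hUV : U ≤ V) : IsIso (f ∣_ U) := by
  have hU : V.ι ''ᵁ (V.ι ⁻¹ᵁ U) = U := by
    ext1
    simpa [Set.image_preimage_eq_inter_range, Scheme.Opens.range_ι] using Set.inter_eq_left.mpr hUV
  have h1 : IsIso (f ∣_ V ∣_ (V.ι ⁻¹ᵁ U)) := inferInstance
  have h2 := isIso_of_arrow_iso _ _ (morphismRestrictRestrict f V (V.ι ⁻¹ᵁ U)) h1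
  rwa [hU] at h2

lemma surjective_of_proper_birational {Y X : Scheme} (f : Y ⟶ X)
    [IsProper f] (hb : ∃ V : X.Opens, Dense (V : Set X) ∧ IsIso (f ∣_ V)) :
    Function.Surjective f.base := by
  obtain ⟨V, hVd, hiso⟩ := hb
  have hclosed : IsClosed (Set.range f.base) := f.isClosedMap.isClosed_range
  have hsub : (V : Set X) ⊆ Set.range f.base := by
    rintro x hx
    have hsurj : Function.Surjective (f ∣_ V).base := by
      have : IsIso (f ∣_ V).base := inferInstance
      exact (TopCat.homeoOfIso (asIso (f ∣_ V).base)).surjective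
    obtain ⟨y, hy⟩ := hsurj ⟨x, hx⟩
    refine ⟨(f ⁻¹ᵁ V).ι.base y, ?_⟩
    have h2 : ((f ∣_ V) ≫ V.ι).base y = ((f ⁻¹ᵁ V).ι ≫ f).base y := by
      rw [morphismRestrict_ι]
    simp only [Scheme.Hom.comp_apply] at h2
    rw [← h2, hy]
    rfl
  have : Dense (Set.range f.base) := hVd.mono hsub
  rw [← Set.range_eq_univ, ← hclosed.closure_eq, this.closure_eq]

lemma isIso_restrict_pair {X Y Z : Scheme} [IsIntegral Y]
    (f : Y ⟶ X) (g : Z ⟶ Y) [IsProper f] [IsProper g]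
    (hbg : ∃ W : Y.Opens, Dense (W : Set Y) ∧ IsIso (g ∣_ W))
    (U : X.Opens) (hc : IsIso ((g ≫ f) ∣_ U)) :
    IsIso (f ∣_ U) ∧ IsIso (g ∣_ (f ⁻¹ᵁ U)) := by
  set a := g ∣_ (f ⁻¹ᵁ U) with ha_def
  set b := f ∣_ U with hb_def
  have hcomp : (g ≫ f) ∣_ U = a ≫ b := morphismRestrict_comp g f U
  rw [hcomp] at hc
  haveI : IsIso (a ≫ b) := hc
  -- a is surjective on points
  have hgsurj : Function.Surjective g.base := surjective_of_proper_birational g hbg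
  have hasurj : Function.Surjective a.base := by
    rintro ⟨y, hy⟩
    obtain ⟨z, rfl⟩ := hgsurj y
    refine ⟨⟨z, hy⟩, ?_⟩
    exact Subtype.ext (morphismRestrict_base_coe g (f ⁻¹ᵁ U) ⟨z, hy⟩)
  -- the section s of b
  let s : U.toScheme ⟶ (f ⁻¹ᵁ U).toScheme := inv (a ≫ b) ≫ a
  have hsb : s ≫ b = 𝟙 _ := by simp [s]
  have hbsep : IsSeparated b := IsZariskiLocalAtTarget.restrict (P := @IsSeparated) (inferInstance : IsSeparated f) U
  have hscl : IsClosedImmersion s := by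
    have h1 : IsClosedImmersion (s ≫ b) := by rw [hsb]; infer_instance
    exact IsClosedImmersion.of_comp s b
  have hssurj : Surjective s := by
    constructor
    intro y
    obtain ⟨z, rfl⟩ := hasurj y
    refine ⟨b.base (a.base z), ?_⟩
    have h3 : a ≫ b ≫ s = a := by
      simp only [s]
      rw [← Category.assoc, IsIso.hom_inv_id_assoc]
    calc s.base (b.base (a.base z)) = (a ≫ b ≫ s).base z := by
          simp [Scheme.Hom.comp_apply]
      _ = a.base z := by rw [h3]
  have hred : IsReduced (f ⁻¹ᵁ U).toScheme := isReduced_of_isOpenImmersion (f ⁻¹ᵁ U).ι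
  have hsiso : IsIso s := isIso_of_isClosedImmersion_of_surjective s
  have hbiso : IsIso b := by
    have : IsIso (s ≫ b) := by rw [hsb]; infer_instance
    exact IsIso.of_isIso_comp_left s b
  refine ⟨hbiso, ?_⟩
  exact IsIso.of_isIso_comp_right a b

lemma exists_comp_restrict_isIso {X Y Z : Scheme} (f : Y ⟶ X) (g : Z ⟶ Y)
    {V : X.Opens} {W : Y.Opens} (hV : IsIso (f ∣_ V)) (hW : IsIso (g ∣_ W)) :
    ∃ U : X.Opens, IsIso ((g ≫ f) ∣_ U) ∧ f ⁻¹ᵁ U = f ⁻¹ᵁ V ⊓ W := by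
  open TopologicalSpace in
  let T : Opens V.toScheme := (f ∣_ V) ''ᵁ ((f ⁻¹ᵁ V).ι ⁻¹ᵁ W)
  have h1 : f ⁻¹ᵁ (V.ι ''ᵁ T) = (f ⁻¹ᵁ V).ι ''ᵁ ((f ∣_ V) ⁻¹ᵁ T) :=
    (image_morphismRestrict_preimage f V T).symm
  have h2 : (f ∣_ V) ⁻¹ᵁ T = (f ⁻¹ᵁ V).ι ⁻¹ᵁ W :=
    Scheme.Hom.preimage_image_eq _ _
  have hpre : f ⁻¹ᵁ (V.ι ''ᵁ T) = f ⁻¹ᵁ V ⊓ W := by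
    rw [h1, h2]
    ext1
    simp [Set.image_preimage_eq_inter_range, Scheme.Opens.range_ι, Set.inter_comm]
  refine ⟨V.ι ''ᵁ T, ?_, hpre⟩
  rw [morphismRestrict_comp]
  have hfi : IsIso (f ∣_ (V.ι ''ᵁ T)) :=
    isIso_morphismRestrict_of_le f hV (Scheme.Opens.ι_image_le V T)
  have hgi : IsIso (g ∣_ (f ⁻¹ᵁ (V.ι ''ᵁ T))) := by
    refine isIso_morphismRestrict_of_le g hW ?_
    rw [hpre]
    exact inf_le_right
  exact (inferInstance : IsIso (g ∣_ (f ⁻¹ᵁ (V.ι ''ᵁ T)) ≫ f ∣_ (V.ι ''ᵁ T)))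

lemma not_mem_excLocus_iff {W X : Scheme} (h : W ⟶ X) (z : W) :
    z ∉ excLocus h ↔ ∃ V : X.Opens, ∃ _ : IsIso (h ∣_ V), z ∈ h ⁻¹ᵁ V := by
  simp only [excLocus, Set.mem_compl_iff, not_not, Set.mem_iUnion, Subtype.exists, exists_prop]
  rfl

/-- For proper birational morphisms `f : Y → X` and `g : Z → Y` of varieties (integral separated
schemes of finite type over an algebraically closed field), the exceptional locus of the composite
`f ∘ g` equals the union of `g⁻¹(Exc f)` and `Exc g`. -/
theorem excLocus_comp
    (k : Type) [Field k] [IsAlgClosed k]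
    {X Y Z : Scheme} [IsIntegral X] [IsIntegral Y] [IsIntegral Z]
    (sX : X ⟶ Spec (CommRingCat.of k)) (sY : Y ⟶ Spec (CommRingCat.of k))
    (sZ : Z ⟶ Spec (CommRingCat.of k))
    [IsSeparated sX] [IsSeparated sY] [IsSeparated sZ]
    [LocallyOfFiniteType sX] [LocallyOfFiniteType sY] [LocallyOfFiniteType sZ]
    [QuasiCompact sX] [QuasiCompact sY] [QuasiCompact sZ]
    (f : Y ⟶ X) (g : Z ⟶ Y) (hf : f ≫ sX = sY) (hg : g ≫ sY = sZ)
    [IsProper f] [IsProper g]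
    (hbf : IsBirationalMap f) (hbg : IsBirationalMap g) :
    excLocus (g ≫ f) = g.base ⁻¹' excLocus f ∪ excLocus g := by
  ext z
  rw [← not_iff_not]
  simp only [Set.mem_union, Set.mem_preimage, not_or]
  rw [not_mem_excLocus_iff, not_mem_excLocus_iff, not_mem_excLocus_iff]
  constructor
  · rintro ⟨U, hU, hzU⟩
    obtain ⟨hfU, hgU⟩ := isIso_restrict_pair f g hbg U hU
    have hz' : z ∈ g ⁻¹ᵁ (f ⁻¹ᵁ U) := by rwa [← Scheme.Hom.comp_preimage]
    exact ⟨⟨U, hfU, hz'⟩, ⟨f ⁻¹ᵁ U, hgU, hz'⟩⟩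
  · rintro ⟨⟨V, hV, hzV⟩, ⟨W, hW, hzW⟩⟩
    obtain ⟨U, hU, hpre⟩ := exists_comp_restrict_isIso f g hV hW
    refine ⟨U, hU, ?_⟩
    rw [Scheme.Hom.comp_preimage, hpre]
    exact ⟨hzV, hzW⟩
end

section
/- Let M be a finitely generated free abelian group and M⁺ ⊆ M a finitely generated saturated submonoid generating M as a group. Let N = Hom(M, ℤ) and N⁺ = { n ∈ N : n(m) ≥ 0 for all m ∈ M⁺ }. Then N⁺ is a finitely generated saturated submonoid of N. -/
/-- A submonoid `S` of an abelian group is saturated if `k • m ∈ S` for some `k > 0`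
implies `m ∈ S`. -/
def SaturatedAddSubmonoid' {M : Type} [AddCommGroup M] (S : AddSubmonoid M) : Prop :=
  ∀ (k : ℕ) (m : M), 0 < k → k • m ∈ S → m ∈ S

/-- The dual monoid `N⁺ = { n ∈ N = Hom(M, ℤ) : n(m) ≥ 0 for all m ∈ M⁺ }`. -/
def dualMonoid {M : Type} [AddCommGroup M] (S : AddSubmonoid M) :
    AddSubmonoid (M →ₗ[ℤ] ℤ) where
  carrier := {n | ∀ m ∈ S, 0 ≤ n m}
  add_mem' := fun {a b} ha hb m hm => by
    simpa using add_nonneg (ha m hm) (hb m hm)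
  zero_mem' := fun m hm => by simp

/-- A submonoid of `σ → ℕ` (σ finite) which is closed under (truncated) subtraction of
pointwise-smaller elements is finitely generated.  This is the core of Gordan's lemma,
proved via Dickson's lemma. -/
theorem key_fg {σ : Type} [Fintype σ] (T : AddSubmonoid (σ → ℕ))
    (hsub : ∀ x ∈ T, ∀ y ∈ T, y ≤ x → x - y ∈ T) : T.FG := by
  classical
  set mins : Set (σ → ℕ) := {x | x ∈ T ∧ x ≠ 0 ∧ ∀ y ∈ T, y ≠ 0 → y ≤ x → y = x} with hminsdef
  have hanti : IsAntichain (· ≤ ·) mins := by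
    rintro a ⟨haT, ha0, _⟩ b ⟨hbT, hb0, hbmin⟩ hab hle
    exact hab (hbmin a haT ha0 hle)
  have hfin : mins.Finite :=
    hanti.finite_of_partiallyWellOrderedOn
    (Set.isPWO_of_wellQuasiOrderedLE mins)
  rw [AddSubmonoid.fg_iff]
  refine ⟨mins, le_antisymm ((AddSubmonoid.closure_le).2 fun x hx => hx.1) ?_, hfin⟩
  have main : ∀ n : ℕ, ∀ x, x ∈ T → (∑ i, x i) ≤ n → x ∈ AddSubmonoid.closure mins := by
    intro n
    induction n with
    | zero =>
      intro x hxT hdeg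
      have hx0 : x = 0 := by
        funext i
        have := Finset.single_le_sum (f := x) (fun i _ => Nat.zero_le _) (Finset.mem_univ i)
        have : x i = 0 := by omega
        simpa using this
      rw [hx0]; exact zero_mem _
    | succ n ih =>
      intro x hxT hdeg
      by_cases h0 : x = 0
      · rw [h0]; exact zero_mem _
      by_cases hm : x ∈ mins
      · exact AddSubmonoid.subset_closure hm
      · have hex : ∃ y, y ∈ T ∧ y ≠ 0 ∧ y ≤ x ∧ y ≠ x := by
          by_contra hc
          push_neg at hc
          exact hm ⟨hxT, h0, fun y hyT hy0 hyle => hc y hyT hy0 hyle⟩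
        obtain ⟨y, hyT, hy0, hyle, hyne⟩ := hex
        have hyle' : ∀ i, y i ≤ x i := fun i => Pi.le_def.mp hyle i
        have hylt : (∑ i, y i) < ∑ i, x i := by
          obtain ⟨i, hi⟩ : ∃ i, y i ≠ x i := by
            by_contra hc; push_neg at hc; exact hyne (funext hc)
          exact Finset.sum_lt_sum (fun j _ => hyle' j)
            ⟨i, Finset.mem_univ i, lt_of_le_of_ne (hyle' i) hi⟩
        have hypos : 1 ≤ ∑ i, y i := by
          obtain ⟨i, hi⟩ : ∃ i, y i ≠ 0 := by
            by_contra hc; push_neg at hc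
            exact hy0 (funext fun i => by simpa using hc i)
          have := Finset.single_le_sum (f := y) (fun j _ => Nat.zero_le _) (Finset.mem_univ i)
          omega
        have hdegsum : (∑ i, (x - y) i) + (∑ i, y i) = ∑ i, x i := by
          rw [← Finset.sum_add_distrib]
          exact Finset.sum_congr rfl fun i _ => by
            have := hyle' i
            simp only [Pi.sub_apply]
            omega
        have hxyT : x - y ∈ T := hsub x hxT y hyT hyle
        have h1 : x - y ∈ AddSubmonoid.closure mins := ih (x - y) hxyT (by omega)
        have h2 : y ∈ AddSubmonoid.closure mins := ih y hyT (by omega)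
        have hxy : (x - y) + y = x := by
          funext i
          have := hyle' i
          simp only [Pi.add_apply, Pi.sub_apply]
          omega
        rw [← hxy]
        exact add_mem h1 h2
  intro x hx
  exact main (∑ i, x i) x hx le_rfl

/-- **Gordan's lemma / duality for rational polyhedral cones.**  If `M⁺` is a finitely
generated saturated submonoid of a lattice `M` generating `M` as a group, then the dual
monoid `N⁺ ⊆ N = Hom(M, ℤ)` is again finitely generated and saturated. -/
theorem dualMonoid_fg_and_saturated
    (M : Type) [AddCommGroup M] [Module.Free ℤ M] [Module.Finite ℤ M]
    (Mplus : AddSubmonoid M) (hfg : Mplus.FG) (hsat : SaturatedAddSubmonoid' Mplus)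
    (hgen : AddSubgroup.closure (Mplus : Set M) = ⊤) :
    (dualMonoid Mplus).FG ∧ SaturatedAddSubmonoid' (dualMonoid Mplus) := by
  classical
  have hsatdual : SaturatedAddSubmonoid' (dualMonoid Mplus) := by
    intro k n hk hkn m hm
    have h := hkn m hm
    have hk' : (0 : ℤ) < (k : ℤ) := by exact_mod_cast hk
    have h2 : (0 : ℤ) ≤ (k : ℤ) * n m := by
      have hh : (k • n) m = (k : ℤ) * n m := by
        simp [nsmul_eq_mul]
      rwa [hh] at h
    nlinarith
  refine ⟨?_, hsatdual⟩
  obtain ⟨F, hF⟩ := hfg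
  have hFsub : (F : Set M) ⊆ (Mplus : Set M) := by
    rw [← hF]; exact AddSubmonoid.subset_closure
  -- membership in the dual is checked on generators
  have hdual : ∀ n : M →ₗ[ℤ] ℤ, n ∈ dualMonoid Mplus ↔ ∀ m ∈ F, 0 ≤ n m := by
    intro n
    constructor
    · exact fun hn m hm => hn m (hFsub hm)
    · intro h m hm
      have hle : Mplus ≤ AddSubmonoid.comap n.toAddMonoidHom (AddSubmonoid.nonneg ℤ) := by
        rw [← hF]
        exact AddSubmonoid.closure_le.2 fun x hx => h x hx
      exact hle hm
  -- F generates M as a group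
  have hFgen' : AddSubgroup.closure (F : Set M) = ⊤ := by
    rw [eq_top_iff, ← hgen]
    apply (AddSubgroup.closure_le _).2
    intro x hx
    have hle : Mplus ≤ (AddSubgroup.closure (F : Set M)).toAddSubmonoid := by
      rw [← hF]
      exact AddSubmonoid.closure_le.2 fun y hy => AddSubgroup.subset_closure hy
    exact hle hx
  have hFgen : ∀ n : M →ₗ[ℤ] ℤ, (∀ m ∈ F, n m = 0) → n = 0 := by
    intro n hn
    have hker : AddSubgroup.closure (F : Set M) ≤ (LinearMap.ker n).toAddSubgroup :=
      (AddSubgroup.closure_le _).2 fun x hx => by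
        simpa [LinearMap.mem_ker] using hn x hx
    rw [hFgen'] at hker
    ext m
    have : m ∈ (LinearMap.ker n).toAddSubgroup := hker (AddSubgroup.mem_top m)
    simpa [LinearMap.mem_ker] using this
  -- the embedding into F → ℕ
  let e : ↥(dualMonoid Mplus) →+ ({x // x ∈ F} → ℕ) :=
    { toFun := fun n i => ((n : M →ₗ[ℤ] ℤ) i.1).toNat
      map_zero' := by funext i; simp
      map_add' := fun a b => by
        funext i
        have ha : 0 ≤ (a : M →ₗ[ℤ] ℤ) i.1 := a.2 i.1 (hFsub i.2)
        have hb : 0 ≤ (b : M →ₗ[ℤ] ℤ) i.1 := b.2 i.1 (hFsub i.2)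
        have hab : ((a + b : ↥(dualMonoid Mplus)) : M →ₗ[ℤ] ℤ) i.1
            = (a : M →ₗ[ℤ] ℤ) i.1 + (b : M →ₗ[ℤ] ℤ) i.1 := by
          simp
        simp only [Pi.add_apply, hab]
        omega }
  have he : ∀ (n : ↥(dualMonoid Mplus)) (i : {x // x ∈ F}),
      e n i = ((n : M →ₗ[ℤ] ℤ) i.1).toNat := fun n i => rfl
  have einj : Function.Injective e := by
    intro a b hab
    have hval : ∀ m ∈ F, (a : M →ₗ[ℤ] ℤ) m = (b : M →ₗ[ℤ] ℤ) m := by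
      intro m hm
      have h1 : ((a : M →ₗ[ℤ] ℤ) m).toNat = ((b : M →ₗ[ℤ] ℤ) m).toNat :=
        congrFun hab ⟨m, hm⟩
      have ha : 0 ≤ (a : M →ₗ[ℤ] ℤ) m := a.2 m (hFsub hm)
      have hb : 0 ≤ (b : M →ₗ[ℤ] ℤ) m := b.2 m (hFsub hm)
      omega
    have hsub0 : (a : M →ₗ[ℤ] ℤ) - b = 0 :=
      hFgen _ fun m hm => by simp [LinearMap.sub_apply, hval m hm]
    exact Subtype.ext (sub_eq_zero.mp hsub0)
  -- the range is closed under subtraction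
  have hT : ∀ x ∈ AddMonoidHom.mrange e, ∀ y ∈ AddMonoidHom.mrange e,
      y ≤ x → x - y ∈ AddMonoidHom.mrange e := by
    rintro _ ⟨a, rfl⟩ _ ⟨b, rfl⟩ hle
    have hle' : ∀ m (hm : m ∈ F), (b : M →ₗ[ℤ] ℤ) m ≤ (a : M →ₗ[ℤ] ℤ) m := by
      intro m hm
      have h1 : ((b : M →ₗ[ℤ] ℤ) m).toNat ≤ ((a : M →ₗ[ℤ] ℤ) m).toNat := hle ⟨m, hm⟩
      have ha : 0 ≤ (a : M →ₗ[ℤ] ℤ) m := a.2 m (hFsub hm)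
      have hb : 0 ≤ (b : M →ₗ[ℤ] ℤ) m := b.2 m (hFsub hm)
      omega
    have hmem : (a : M →ₗ[ℤ] ℤ) - b ∈ dualMonoid Mplus :=
      (hdual _).2 fun m hm => by
        have := hle' m hm
        simp only [LinearMap.sub_apply]
        omega
    refine ⟨⟨(a : M →ₗ[ℤ] ℤ) - b, hmem⟩, ?_⟩
    funext i
    have ha : 0 ≤ (a : M →ₗ[ℤ] ℤ) i.1 := a.2 i.1 (hFsub i.2)
    have hb : 0 ≤ (b : M →ₗ[ℤ] ℤ) i.1 := b.2 i.1 (hFsub i.2)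
    have hba := hle' i.1 i.2
    have h1 : e ⟨(a : M →ₗ[ℤ] ℤ) - b, hmem⟩ i
        = ((a : M →ₗ[ℤ] ℤ) i.1 - (b : M →ₗ[ℤ] ℤ) i.1).toNat := by
      rw [he]; simp [LinearMap.sub_apply]
    rw [h1]
    simp only [Pi.sub_apply, he]
    omega
  have hTfg : (AddMonoidHom.mrange e).FG := key_fg _ hT
  haveI : AddMonoid.FG ↥(AddMonoidHom.mrange e) :=
    (AddMonoid.fg_iff_addSubmonoid_fg _).2 hTfg
  have hbij : Function.Bijective e.mrangeRestrict :=
    ⟨fun a b h => einj (congrArg Subtype.val h), e.mrangeRestrict_surjective⟩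
  let eqv := AddEquiv.ofBijective e.mrangeRestrict hbij
  haveI : AddMonoid.FG ↥(dualMonoid Mplus) :=
    AddMonoid.fg_of_surjective eqv.symm.toAddMonoidHom eqv.symm.surjective
  exact (AddMonoid.fg_iff_addSubmonoid_fg _).1 this
end
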